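/- arXiv:2510.25738 — 4 statements merged into one kernel-verified Lean document; each statement's English description precedes it below -/
import Mathlib

section
/- Fix an integer ℓ ≥ 2, a vector α ∈ ℝ^ℓ with α_j > 0 for all j and ∑_{j=1}^ℓ α_j = 1, and positive reals ω_1, …, ω_ℓ. For every i ∈ {1, …, ℓ} and every p ∈ S^{ℓ−1}_{++}, there exists a vector v ∈ ℝ^ℓ with ⟨p, v⟩ = 0 such that ⟨v, z_i^{CD}(p)⟩ < 0 and ⟨v, z_j^{CD}(p)⟩ > 0 for every j ≠ i. (In other words, in the tangent hyperplane to the sphere at p there is a hyperplane such that z_i^{CD}(p) and the remaining vectors z_j^{CD}(p) point to opposite sides of it.) -/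
/-! Every `zCD α ω k p` is orthogonal to `p` (Walras's law, from `∑ j, α j = 1`). Hence the
projection `v = eᵢ - pᵢ p` of the basis vector `eᵢ` onto the tangent space `p⊥` pairs with
`zCD α ω k p` exactly as `eᵢ` does, giving its `i`-th coordinate: `-(1 - αᵢ) ωᵢ < 0` for
`k = i` and `αᵢ (p_k / pᵢ) ω_k > 0` for `k ≠ i`. -/

open Finset

/-- The individual excess demand of the `i`-th Cobb–Douglas consumer, with exponents `α`
and endowment `ω i` in good `i`. -/
noncomputable def zCD {ℓ : ℕ} (α ω : Fin ℓ → ℝ) (i : Fin ℓ) (p : Fin ℓ → ℝ) :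
    Fin ℓ → ℝ :=
  fun j => if j = i then -(1 - α i) * ω i else α j * (p i / p j) * ω i

section Projection

variable {ι : Type*} [Fintype ι]

theorem lt_one_of_sum_eq_one {α : ι → ℝ} (hα : ∀ j, 0 < α j) (hsum : ∑ j, α j = 1)
    (hcard : 1 < Fintype.card ι) (i : ι) : α i < 1 := by
  obtain ⟨k, hk⟩ := Fintype.exists_ne_of_one_lt_card hcard i
  rw [← hsum]
  exact single_lt_sum hk (mem_univ i) (mem_univ k) (hα k) fun j _ _ => (hα j).le

variable [DecidableEq ι]

theorem single_sub_smul_dotProduct (p z : ι → ℝ) (i : ι) :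
    (Pi.single i 1 - p i • p) ⬝ᵥ z = z i - p i * (p ⬝ᵥ z) := by
  rw [sub_dotProduct, single_dotProduct, smul_dotProduct, one_mul, smul_eq_mul]

theorem dotProduct_single_sub_smul_self {p : ι → ℝ} (hp : p ⬝ᵥ p = 1) (i : ι) :
    p ⬝ᵥ (Pi.single i 1 - p i • p) = 0 := by
  rw [dotProduct_sub, dotProduct_single, dotProduct_smul, hp, smul_eq_mul]
  ring

end Projection

section CobbDouglas

variable {ℓ : ℕ} {α ω p : Fin ℓ → ℝ}

theorem zCD_self (i : Fin ℓ) : zCD α ω i p i = -(1 - α i) * ω i := if_pos rfl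

theorem zCD_of_ne {i j : Fin ℓ} (h : j ≠ i) : zCD α ω i p j = α j * (p i / p j) * ω i :=
  if_neg h

theorem mul_zCD (hp : ∀ j, p j ≠ 0) (k j : Fin ℓ) :
    p j * zCD α ω k p j = α j * (p k * ω k) - if j = k then p k * ω k else 0 := by
  by_cases h : j = k
  · subst h
    rw [zCD_self, if_pos rfl]
    ring
  · rw [zCD_of_ne h, if_neg h]
    field_simp [hp j]
    ring

theorem dotProduct_zCD (hp : ∀ j, p j ≠ 0) (hα : ∑ j, α j = 1) (k : Fin ℓ) :
    p ⬝ᵥ zCD α ω k p = 0 := by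
  simp only [dotProduct, mul_zCD hp, sum_sub_distrib, ← sum_mul, hα, sum_ite_eq', mem_univ,
    if_true, one_mul, sub_self]

theorem single_sub_smul_dotProduct_zCD (hp : ∀ j, p j ≠ 0) (hα : ∑ j, α j = 1)
    (i k : Fin ℓ) : (Pi.single i 1 - p i • p) ⬝ᵥ zCD α ω k p = zCD α ω k p i := by
  rw [single_sub_smul_dotProduct, dotProduct_zCD hp hα, mul_zero, sub_zero]

end CobbDouglas

/-- for every `i` and every `p` in the positive part of the unit sphere,
there is a vector `v` tangent to the sphere at `p` (i.e. `⟨p, v⟩ = 0`) such that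
`⟨v, zCD α ω i p⟩ < 0` while `⟨v, zCD α ω j p⟩ > 0` for all `j ≠ i`: the vector
`zCD α ω i p` and the remaining ones point to opposite sides of a hyperplane in the
tangent space. -/
theorem zCD_separating_hyperplane
    (ℓ : ℕ) (hℓ : 2 ≤ ℓ)
    (α : Fin ℓ → ℝ) (hα : ∀ j, 0 < α j) (hαsum : ∑ j, α j = 1)
    (ω : Fin ℓ → ℝ) (hω : ∀ j, 0 < ω j) :
    ∀ i : Fin ℓ, ∀ p : Fin ℓ → ℝ, (∀ j, 0 < p j) → ∑ j, (p j) ^ 2 = 1 →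
      ∃ v : Fin ℓ → ℝ, (∑ j, p j * v j = 0) ∧
        (∑ j, v j * zCD α ω i p j < 0) ∧
        (∀ k : Fin ℓ, k ≠ i → 0 < ∑ j, v j * zCD α ω k p j) := by
  intro i p hp hps
  have hp0 : ∀ j, p j ≠ 0 := fun j => (hp j).ne'
  have hpp : p ⬝ᵥ p = 1 := by simpa only [dotProduct, sq] using hps
  have hαi : α i < 1 := lt_one_of_sum_eq_one hα hαsum (by rw [Fintype.card_fin]; omega) i
  refine ⟨Pi.single i 1 - p i • p, dotProduct_single_sub_smul_self hpp i, ?_, fun k hk => ?_⟩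
  · change (Pi.single i 1 - p i • p) ⬝ᵥ zCD α ω i p < 0
    rw [single_sub_smul_dotProduct_zCD hp0 hαsum, zCD_self]
    exact mul_neg_of_neg_of_pos (by linarith) (hω i)
  · change 0 < (Pi.single i 1 - p i • p) ⬝ᵥ zCD α ω k p
    rw [single_sub_smul_dotProduct_zCD hp0 hαsum, zCD_of_ne (Ne.symm hk)]
    exact mul_pos (mul_pos (hα i) (div_pos (hp k) (hp i))) (hω k)
end

section
/- Fix an integer ℓ ≥ 2, a vector α ∈ ℝ^ℓ with α_j > 0 for all j and ∑_{j=1}^ℓ α_j = 1, and positive reals ω_1, …, ω_ℓ. For every p ∈ S^{ℓ−1}_{++}, the linear span of the ℓ vectors z_1^{CD}(p), …, z_ℓ^{CD}(p) equals the hyperplane {v ∈ ℝ^ℓ : ⟨p, v⟩ = 0}. -/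
/-!
With `w j = α j / p j` one has `zCD α ω i p = ω i • (p i • w - eᵢ)` and `⟨p, w⟩ = ∑ j, α j = 1`.
Hence every `p i • w - eᵢ` is orthogonal to `p`, and conversely every `v` orthogonal to `p` is
`∑ i, (-v i) • (p i • w - eᵢ) = v - ⟨p, v⟩ • w`. The nonzero factors `ω i` do not change the span.
-/

open Finset

theorem Submodule.span_range_smul_of_ne_zero {K ι M : Type*} [Field K] [AddCommGroup M]
    [Module K M] (c : ι → K) (hc : ∀ i, c i ≠ 0) (v : ι → M) :
    span K (Set.range fun i => c i • v i) = span K (Set.range v) := by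
  apply le_antisymm <;> rw [span_le] <;> rintro _ ⟨i, rfl⟩
  · exact smul_mem _ _ (subset_span ⟨i, rfl⟩)
  · rw [← inv_smul_smul₀ (hc i) (v i)]
    exact smul_mem _ _ (subset_span ⟨i, rfl⟩)

section

variable {K ι : Type*} [Field K] [Fintype ι] [DecidableEq ι]

theorem sum_neg_smul_smul_sub_single {p w v : ι → K} (hv : p ⬝ᵥ v = 0) :
    ∑ i, (-v i) • (p i • w - Pi.single i 1) = v :=
  calc ∑ i, (-v i) • (p i • w - Pi.single i 1)
      = ∑ i, Pi.single i (v i) - (v ⬝ᵥ p) • w := by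
        simp only [smul_sub, smul_smul, neg_mul, neg_smul, sub_neg_eq_add, sum_add_distrib,
          sum_neg_distrib, ← sum_smul, ← Pi.single_smul', smul_eq_mul, mul_one, dotProduct]
        abel
    _ = v := by rw [univ_sum_single, dotProduct_comm, hv, zero_smul, sub_zero]

theorem mem_span_range_smul_sub_single_iff {p w : ι → K} (hpw : p ⬝ᵥ w = 1) {v : ι → K} :
    v ∈ Submodule.span K (Set.range fun i => p i • w - Pi.single i 1) ↔ p ⬝ᵥ v = 0 := by
  constructor
  · intro hv
    have hle : Submodule.span K (Set.range fun i => p i • w - Pi.single i 1) ≤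
        LinearMap.ker (dotProductEquiv K ι p) := by
      rw [Submodule.span_le]
      rintro _ ⟨i, rfl⟩
      simp [dotProduct_sub, dotProduct_smul, hpw]
    simpa using hle hv
  · intro hv
    rw [← sum_neg_smul_smul_sub_single (w := w) hv]
    exact Submodule.sum_mem _ fun i _ => Submodule.smul_mem _ _ (Submodule.subset_span ⟨i, rfl⟩)

end

theorem zCD_eq_smul {ℓ : ℕ} (α ω : Fin ℓ → ℝ) (i : Fin ℓ) {p : Fin ℓ → ℝ}
    (hp : ∀ j, p j ≠ 0) :
    zCD α ω i p = ω i • (p i • (fun j => α j / p j) - Pi.single i 1) := by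
  funext j
  simp only [zCD, Pi.smul_apply, Pi.sub_apply, smul_eq_mul, Pi.single_apply]
  split_ifs with hji
  all_goals field_simp [hp j]
  · subst hji
    ring
  · ring

theorem zCD_span_eq_tangent_hyperplane_general
    (ℓ : ℕ)
    (α : Fin ℓ → ℝ) (hαsum : ∑ j, α j = 1)
    (ω : Fin ℓ → ℝ) (hω : ∀ j, 0 < ω j) :
    ∀ p : Fin ℓ → ℝ, (∀ j, 0 < p j) → ∑ j, (p j) ^ 2 = 1 →
      (Submodule.span ℝ (Set.range fun i => zCD α ω i p) : Set (Fin ℓ → ℝ)) =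
        {v : Fin ℓ → ℝ | ∑ j, p j * v j = 0} := by
  intro p hp _
  have hp0 : ∀ j, p j ≠ 0 := fun j => (hp j).ne'
  have hpw : p ⬝ᵥ (fun j => α j / p j) = 1 := by
    simp only [dotProduct, mul_div_cancel₀ _ (hp0 _), hαsum]
  ext v
  rw [SetLike.mem_coe, funext fun i => zCD_eq_smul α ω i hp0,
    Submodule.span_range_smul_of_ne_zero ω (fun j => (hω j).ne'),
    mem_span_range_smul_sub_single_iff hpw]
  rfl

/-- for every `p` in the positive part of the unit sphere, the linear span
of the vectors `zCD α ω 1 p, …, zCD α ω ℓ p` is exactly the tangent hyperplane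
`{v | ⟨p, v⟩ = 0}`. -/
theorem zCD_span_eq_tangent_hyperplane
    (ℓ : ℕ) (hℓ : 2 ≤ ℓ)
    (α : Fin ℓ → ℝ) (hα : ∀ j, 0 < α j) (hαsum : ∑ j, α j = 1)
    (ω : Fin ℓ → ℝ) (hω : ∀ j, 0 < ω j) :
    ∀ p : Fin ℓ → ℝ, (∀ j, 0 < p j) → ∑ j, (p j) ^ 2 = 1 →
      (Submodule.span ℝ (Set.range fun i => zCD α ω i p) : Set (Fin ℓ → ℝ)) =
        {v : Fin ℓ → ℝ | ∑ j, p j * v j = 0} :=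
  zCD_span_eq_tangent_hyperplane_general ℓ α hαsum ω hω
end

section
/- Let E be a real vector space and let v_1, …, v_m ∈ E be vectors whose linear span is all of E. Suppose there exist strictly positive reals c_1, …, c_m with ∑_{i=1}^m c_i v_i = 0. Then for every w ∈ E there exist strictly positive reals μ_1, …, μ_m such that w = ∑_{i=1}^m μ_i v_i. -/
/-! Adding a large enough multiple of the positive relation `∑ cᵢ vᵢ = 0` to any representation
`w = ∑ aᵢ vᵢ` makes every coefficient positive. -/

theorem exists_forall_pos_add_mul {R ι : Type*} [Field R] [LinearOrder R] [IsStrictOrderedRing R]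
    [Finite ι] (a c : ι → R) (hc : ∀ i, 0 < c i) : ∃ t : R, ∀ i, 0 < a i + t * c i :=
  (Filter.eventually_all.2 fun i =>
    (Filter.tendsto_atTop_add_const_left _ (a i)
      (Filter.tendsto_id.atTop_mul_const (hc i))).eventually_gt_atTop 0).exists

theorem sum_add_mul_smul_of_sum_smul_eq_zero {R M ι : Type*} [Semiring R] [AddCommMonoid M]
    [Module R M] (s : Finset ι) (a c : ι → R) (v : ι → M) (hrel : ∑ i ∈ s, c i • v i = 0) (t : R) :
    ∑ i ∈ s, (a i + t * c i) • v i = ∑ i ∈ s, a i • v i := by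
  simp only [add_smul, mul_smul, Finset.sum_add_distrib, ← Finset.smul_sum, hrel, smul_zero,
    add_zero]

theorem exists_pos_coeffs_of_mem_span {R M ι : Type*} [Field R] [LinearOrder R]
    [IsStrictOrderedRing R] [AddCommGroup M] [Module R M] [Fintype ι] {v : ι → M} {c : ι → R}
    (hc : ∀ i, 0 < c i) (hrel : ∑ i, c i • v i = 0) {w : M}
    (hw : w ∈ Submodule.span R (Set.range v)) :
    ∃ μ : ι → R, (∀ i, 0 < μ i) ∧ w = ∑ i, μ i • v i := by
  obtain ⟨a, rfl⟩ := (Submodule.mem_span_range_iff_exists_fun R).mp hw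
  obtain ⟨t, ht⟩ := exists_forall_pos_add_mul a c hc
  exact ⟨fun i => a i + t * c i, ht, (sum_add_mul_smul_of_sum_smul_eq_zero _ a c v hrel t).symm⟩

/-- if vectors `v 1, …, v m` span a real vector space `E` and admit a
vanishing linear combination with strictly positive coefficients, then they positively
span `E`: every `w ∈ E` is a linear combination of the `v i` with strictly positive
coefficients. -/
theorem positively_spans_of_span_top_of_pos_relation
    (E : Type*) [AddCommGroup E] [Module ℝ E]
    (m : ℕ) (v : Fin m → E)
    (hspan : Submodule.span ℝ (Set.range v) = ⊤)
    (c : Fin m → ℝ) (hc : ∀ i, 0 < c i) (hrel : ∑ i, c i • v i = 0) :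
    ∀ w : E, ∃ μ : Fin m → ℝ, (∀ i, 0 < μ i) ∧ w = ∑ i, μ i • v i :=
  fun _ => exists_pos_coeffs_of_mem_span hc hrel (hspan ▸ Submodule.mem_top)
end

section
/- (Theorem 3.1) Fix an integer ℓ ≥ 2, a vector α ∈ ℝ^ℓ with α_j > 0 for all j and ∑_{j=1}^ℓ α_j = 1, positive reals ω_1, …, ω_ℓ, and k ∈ ℕ ∪ {∞}. Let z : ℝ^ℓ → ℝ^ℓ be a map that is C^k on S^{ℓ−1}_{++} (in the sense of ContDiffOn) and satisfies ⟨p, z(p)⟩ = 0 for every p ∈ S^{ℓ−1}_{++}. Then there exist functions μ_1, …, μ_ℓ : ℝ^ℓ → ℝ, each C^k on S^{ℓ−1}_{++}, with μ_i(p) > 0 for every p ∈ S^{ℓ−1}_{++} and every i, such that z(p) = ∑_{i=1}^ℓ μ_i(p) z_i^{CD}(p) for every p ∈ S^{ℓ−1}_{++}. -/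
/-!
Writing `(z_i^{CD}(p))_j = ω_i (α_j p_i / p_j - δ_ij)`, a combination `∑ μ_i z_i^{CD}(p)` has
`j`-th coordinate `α_j c / p_j - μ_j ω_j` with `c = ∑ μ_i ω_i p_i`. So for any scale `c` the
weights `μ_j = (α_j c / p_j - z_j) / ω_j` reproduce `z`, provided they are consistent with `c`,
which is exactly Walras' law together with `∑ α_j = 1`. They are positive as soon as
`c > p_j z_j / α_j` for every `j`, and `c = 1 + ∑ (p_j z_j / α_j)^2` is such a scale that
depends smoothly on `p`.
-/

open Finset

section Scale

variable {ι : Type*} [Fintype ι]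

noncomputable def cobbDouglasScale (α p v : ι → ℝ) : ℝ :=
  1 + ∑ j, (p j * v j / α j) ^ 2

theorem lt_cobbDouglasScale (α p v : ι → ℝ) (i : ι) :
    p i * v i / α i < cobbDouglasScale α p v := by
  have hle : (p i * v i / α i) ^ 2 ≤ ∑ j, (p j * v j / α j) ^ 2 :=
    single_le_sum (f := fun j => (p j * v j / α j) ^ 2) (fun j _ => sq_nonneg _) (mem_univ i)
  unfold cobbDouglasScale
  nlinarith [sq_nonneg (p i * v i / α i - 1)]

theorem ContDiffOn.cobbDouglasScale {E : Type*} [NormedAddCommGroup E] [NormedSpace ℝ E]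
    {k : ℕ∞} {s : Set E} {α : ι → ℝ} {p v : E → ι → ℝ}
    (hp : ContDiffOn ℝ k p s) (hv : ContDiffOn ℝ k v s) :
    ContDiffOn ℝ k (fun x => cobbDouglasScale α (p x) (v x)) s :=
  contDiffOn_const.add <| ContDiffOn.sum fun j _ =>
    (((contDiffOn_pi.mp hp j).mul (contDiffOn_pi.mp hv j)).div_const _).pow 2

end Scale

section Weight

variable {ℓ : ℕ} {α ω p v : Fin ℓ → ℝ} {c : ℝ}

noncomputable def cobbDouglasWeight (α ω p v : Fin ℓ → ℝ) (c : ℝ) (i : Fin ℓ) : ℝ :=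
  (α i * c / p i - v i) / ω i

theorem zCD_apply_of_ne_zero (i : Fin ℓ) {j : Fin ℓ} (hpj : p j ≠ 0) :
    zCD α ω i p j = α j / p j * (ω i * p i) - if i = j then ω i else 0 := by
  unfold zCD
  by_cases hij : i = j
  · subst hij
    simp only [if_true]
    field_simp
    ring
  · simp only [if_neg hij, if_neg (Ne.symm hij)]
    ring

theorem sum_smul_zCD_apply (m : Fin ℓ → ℝ) {j : Fin ℓ} (hpj : p j ≠ 0) :
    (∑ i, m i • zCD α ω i p) j = α j / p j * ∑ i, m i * ω i * p i - m j * ω j := by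
  simp only [Finset.sum_apply, Pi.smul_apply, smul_eq_mul, zCD_apply_of_ne_zero _ hpj, mul_sub,
    sum_sub_distrib, mul_ite, mul_zero, sum_ite_eq', mem_univ, if_true, mul_sum]
  congr 1
  exact sum_congr rfl fun i _ => by ring

theorem sum_cobbDouglasWeight_mul (hp : ∀ j, p j ≠ 0) (hω : ∀ j, ω j ≠ 0)
    (hα : ∑ j, α j = 1) (hv : ∑ j, p j * v j = 0) :
    ∑ i, cobbDouglasWeight α ω p v c i * ω i * p i = c := by
  have hterm : ∀ i, cobbDouglasWeight α ω p v c i * ω i * p i = α i * c - p i * v i := by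
    intro i
    unfold cobbDouglasWeight
    field_simp [hω i, hp i]
  rw [sum_congr rfl fun i _ => hterm i, sum_sub_distrib, ← sum_mul, hα, hv, one_mul, sub_zero]

theorem sum_cobbDouglasWeight_smul_zCD (hp : ∀ j, p j ≠ 0) (hω : ∀ j, ω j ≠ 0)
    (hα : ∑ j, α j = 1) (hv : ∑ j, p j * v j = 0) :
    ∑ i, cobbDouglasWeight α ω p v c i • zCD α ω i p = v := by
  funext j
  rw [sum_smul_zCD_apply _ (hp j), sum_cobbDouglasWeight_mul hp hω hα hv]
  unfold cobbDouglasWeight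
  field_simp [hp j, hω j]
  ring

theorem cobbDouglasWeight_pos {i : Fin ℓ} (hαi : 0 < α i) (hωi : 0 < ω i) (hpi : 0 < p i)
    (hc : p i * v i / α i < c) : 0 < cobbDouglasWeight α ω p v c i := by
  have hnum : α i * c / p i - v i = α i / p i * (c - p i * v i / α i) := by
    field_simp
  unfold cobbDouglasWeight
  rw [hnum]
  exact div_pos (mul_pos (div_pos hαi hpi) (sub_pos.mpr hc)) hωi

theorem ContDiffOn.cobbDouglasWeight {E : Type*} [NormedAddCommGroup E] [NormedSpace ℝ E]
    {k : ℕ∞} {s : Set E} {p v : E → Fin ℓ → ℝ} {c : E → ℝ} (i : Fin ℓ)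
    (hp : ContDiffOn ℝ k p s) (hv : ContDiffOn ℝ k v s) (hc : ContDiffOn ℝ k c s)
    (hpi : ∀ x ∈ s, p x i ≠ 0) :
    ContDiffOn ℝ k (fun x => _root_.cobbDouglasWeight α ω (p x) (v x) (c x) i) s :=
  (((contDiffOn_const.mul hc).div (contDiffOn_pi.mp hp i) hpi).sub
    (contDiffOn_pi.mp hv i)).div_const _

end Weight

theorem smooth_decomposition_by_cobbDouglas_general
    (ℓ : ℕ)
    (α : Fin ℓ → ℝ) (hα : ∀ j, 0 < α j) (hαsum : ∑ j, α j = 1)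
    (ω : Fin ℓ → ℝ) (hω : ∀ j, 0 < ω j)
    (k : ℕ∞)
    (z : (Fin ℓ → ℝ) → (Fin ℓ → ℝ))
    (S : Set (Fin ℓ → ℝ))
    (hS : S = {p : Fin ℓ → ℝ | (∀ j, 0 < p j) ∧ ∑ j, (p j) ^ 2 = 1})
    (hz : ContDiffOn ℝ k z S)
    (hWalras : ∀ p ∈ S, ∑ j, p j * z p j = 0) :
    ∃ μ : Fin ℓ → (Fin ℓ → ℝ) → ℝ,
      (∀ i, ContDiffOn ℝ k (μ i) S) ∧
      (∀ p ∈ S, ∀ i, 0 < μ i p) ∧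
      (∀ p ∈ S, z p = ∑ i, μ i p • zCD α ω i p) := by
  have hpos : ∀ p ∈ S, ∀ j, 0 < p j := fun p hp => by rw [hS] at hp; exact hp.1
  refine ⟨fun i p => cobbDouglasWeight α ω p (z p) (cobbDouglasScale α p (z p)) i,
    fun i => ?_, fun p hp i => ?_, fun p hp => ?_⟩
  · exact contDiffOn_id.cobbDouglasWeight i hz (contDiffOn_id.cobbDouglasScale hz)
      fun p hp => (hpos p hp i).ne'
  · exact cobbDouglasWeight_pos (hα i) (hω i) (hpos p hp i) (lt_cobbDouglasScale α p (z p) i)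
  · exact (sum_cobbDouglasWeight_smul_zCD (fun j => (hpos p hp j).ne') (fun j => (hω j).ne')
      hαsum (hWalras p hp)).symm

/-- Theorem 3.1: every map `z` which is `C^k` on the positive part
`S = S^{ℓ-1}_{++}` of the unit sphere and satisfies Walras' law `⟨p, z p⟩ = 0` on `S`
can be written, on `S`, as `z p = ∑ i, μ i p • zCD α ω i p` where each `μ i` is `C^k`
on `S` and strictly positive on `S`. -/
theorem smooth_decomposition_by_cobbDouglas
    (ℓ : ℕ) (hℓ : 2 ≤ ℓ)
    (α : Fin ℓ → ℝ) (hα : ∀ j, 0 < α j) (hαsum : ∑ j, α j = 1)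
    (ω : Fin ℓ → ℝ) (hω : ∀ j, 0 < ω j)
    (k : ℕ∞)
    (z : (Fin ℓ → ℝ) → (Fin ℓ → ℝ))
    (S : Set (Fin ℓ → ℝ))
    (hS : S = {p : Fin ℓ → ℝ | (∀ j, 0 < p j) ∧ ∑ j, (p j) ^ 2 = 1})
    (hz : ContDiffOn ℝ k z S)
    (hWalras : ∀ p ∈ S, ∑ j, p j * z p j = 0) :
    ∃ μ : Fin ℓ → (Fin ℓ → ℝ) → ℝ,
      (∀ i, ContDiffOn ℝ k (μ i) S) ∧
      (∀ p ∈ S, ∀ i, 0 < μ i p) ∧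
      (∀ p ∈ S, z p = ∑ i, μ i p • zCD α ω i p) :=
  smooth_decomposition_by_cobbDouglas_general ℓ α hα hαsum ω hω k z S hS hz hWalras
end
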